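/- Let ε₀ > 0 and let R be any real number. Let A, H : [0,ε₀] → ℝ be continuously differentiable with H(0) = 0, and let φ, ξ : [0,ε₀] → ℝ be continuous functions with φ(t) > 0 and ξ(t) > 0 for all t ∈ [0,ε₀]. Suppose that A′(t) = H(t)·ξ(t) for every t ∈ [0,ε₀], and that H′(t)·φ(t) ≤ (R/2)·(A(0) − A(t)) for every t ∈ [0,ε₀]. Then there exists ε ∈ (0,ε₀] such that A(t) ≤ A(0) for every t ∈ [0,ε). -/

import Mathlib

/-!
Put `K = |R / 2| / min φ` and `M = max ξ`, so that `H' ≤ K |A(0) - A|` and `A' = H ξ`. If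
`A(t) > A(0)` for some `t ≤ ε`, let `τ` maximise `A` on `[0, t]`, `σ` minimise it on `[0, τ]`, and
`W = A(τ) - A(σ) > 0`; then `|A(0) - A| ≤ W` on `[0, τ]`. The mean value inequality, starting from
`H(0) = 0`, gives `H ≤ K W τ`, hence `A' ≤ K M W τ`, on `[0, τ]`, and applied once more on `[σ, τ]`
it gives `W ≤ K M τ² W`, which is impossible once `K M ε² < 1`.
-/

open Set Filter Topology

theorem image_sub_le_mul_sub_of_deriv_le_segment {f f' : ℝ → ℝ} {a b C : ℝ}
    (hf : ∀ x ∈ Icc a b, HasDerivWithinAt f (f' x) (Icc a b) x)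
    (bound : ∀ x ∈ Ico a b, f' x ≤ C) : ∀ x ∈ Icc a b, f x - f a ≤ C * (x - a) := by
  have hline (x : ℝ) : HasDerivWithinAt (fun x => f a + C * (x - a)) C (Ici x) x := by
    simpa using (((hasDerivAt_id x).sub_const a).const_mul C).const_add (f a) |>.hasDerivWithinAt
  intro x hx
  have := image_le_of_deriv_right_le_deriv_boundary (fun x hx => (hf x hx).continuousWithinAt)
    (fun x hx => (hf x (Ico_subset_Icc_self hx)).mono_of_mem_nhdsWithin (Icc_mem_nhdsGE_of_mem hx))
    (by simp) (by fun_prop) (fun x _ => hline x) bound hx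
  linarith

theorem le_div_mul_abs_of_mul_le {x p m c d : ℝ} (hm : 0 < m) (hmp : m ≤ p)
    (h : x * p ≤ c * d) : x ≤ |c| / m * |d| := by
  rw [div_mul_eq_mul_div, le_div_iff₀ hm, ← abs_mul]
  rcases le_or_gt x 0 with hx | hx
  · nlinarith [abs_nonneg (c * d)]
  · nlinarith [le_abs_self (c * d)]

theorem exists_pos_le_mul_sq_lt_one (c : ℝ) {ε₀ : ℝ} (hε₀ : 0 < ε₀) :
    ∃ ε, 0 < ε ∧ ε ≤ ε₀ ∧ c * ε ^ 2 < 1 := by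
  have hsmall : ∀ᶠ ε in 𝓝 (0 : ℝ), ε < ε₀ ∧ c * ε ^ 2 < 1 := by
    refine (gt_mem_nhds hε₀).and ?_
    have : Continuous fun ε : ℝ => c * ε ^ 2 := by fun_prop
    exact this.continuousAt.eventually_lt continuousAt_const (by simp)
  obtain ⟨ε, ⟨hε₀', hc⟩, hpos⟩ := (hsmall.filter_mono nhdsWithin_le_nhds).and
    (self_mem_nhdsWithin (s := Ioi 0)) |>.exists
  exact ⟨ε, hpos, hε₀'.le, hc⟩

theorem mul_le_of_deriv_le_of_apply_zero {H H' ξ : ℝ → ℝ} {C M τ : ℝ} (hC : 0 ≤ C)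
    (hH : ∀ t ∈ Icc 0 τ, HasDerivWithinAt H (H' t) (Icc 0 τ) t) (hH0 : H 0 = 0)
    (hH' : ∀ t ∈ Icc 0 τ, H' t ≤ C) (hξ0 : ∀ t ∈ Icc 0 τ, 0 ≤ ξ t)
    (hξM : ∀ t ∈ Icc 0 τ, ξ t ≤ M) : ∀ t ∈ Icc 0 τ, H t * ξ t ≤ C * τ * M := by
  intro t ht
  have hHt : H t ≤ C * τ := by
    have := image_sub_le_mul_sub_of_deriv_le_segment hH
      (fun s hs => hH' s (Ico_subset_Icc_self hs)) t ht
    rw [hH0, sub_zero, sub_zero] at this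
    exact this.trans (mul_le_mul_of_nonneg_left ht.2 hC)
  have hτ : 0 ≤ τ := ht.1.trans ht.2
  calc H t * ξ t ≤ C * τ * ξ t := mul_le_mul_of_nonneg_right hHt (hξ0 t ht)
    _ ≤ C * τ * M := mul_le_mul_of_nonneg_left (hξM t ht) (by positivity)

theorem image_le_left_of_coupled_deriv_bounds {A A' H H' ξ : ℝ → ℝ} {K M T : ℝ} (hK : 0 ≤ K)
    (hA : ∀ t ∈ Icc 0 T, HasDerivWithinAt A (A' t) (Icc 0 T) t)
    (hH : ∀ t ∈ Icc 0 T, HasDerivWithinAt H (H' t) (Icc 0 T) t) (hH0 : H 0 = 0)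
    (hA' : ∀ t ∈ Icc 0 T, A' t = H t * ξ t) (hξ0 : ∀ t ∈ Icc 0 T, 0 ≤ ξ t)
    (hξM : ∀ t ∈ Icc 0 T, ξ t ≤ M) (hH' : ∀ t ∈ Icc 0 T, H' t ≤ K * |A 0 - A t|)
    (hsmall : K * M * T ^ 2 < 1) : ∀ t ∈ Icc 0 T, A t ≤ A 0 := by
  intro t ht
  by_contra! hlt
  have hAcont : ContinuousOn A (Icc 0 T) := fun t ht => (hA t ht).continuousWithinAt
  obtain ⟨τ, hτ, hτmax⟩ := isCompact_Icc.exists_isMaxOn (nonempty_Icc.2 ht.1)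
    (hAcont.mono (Icc_subset_Icc_right ht.2))
  have hτT : Icc 0 τ ⊆ Icc 0 T := Icc_subset_Icc_right (hτ.2.trans ht.2)
  obtain ⟨σ, hσ, hσmin⟩ := isCompact_Icc.exists_isMinOn (nonempty_Icc.2 hτ.1) (hAcont.mono hτT)
  have hσ0 : A σ ≤ A 0 := hσmin (left_mem_Icc.2 hτ.1)
  have h0τ : A 0 ≤ A τ := hτmax (left_mem_Icc.2 ht.1)
  have htτ : A t ≤ A τ := hτmax (right_mem_Icc.2 ht.1)
  set W := A τ - A σ
  have hW : 0 < W := by linarith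
  have hosc (r) (hr : r ∈ Icc 0 τ) : |A 0 - A r| ≤ W := by
    have hrτ : A r ≤ A τ := hτmax (Icc_subset_Icc_right hτ.2 hr)
    have hσr : A σ ≤ A r := hσmin hr
    exact abs_sub_le_iff.2 ⟨by linarith, by linarith⟩
  have hA'le (s) (hs : s ∈ Icc 0 τ) : A' s ≤ K * W * τ * M := by
    rw [hA' s (hτT hs)]
    exact mul_le_of_deriv_le_of_apply_zero (by positivity) (fun r hr => (hH r (hτT hr)).mono hτT)
      hH0 (fun r hr => (hH' r (hτT hr)).trans (mul_le_mul_of_nonneg_left (hosc r hr) hK))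
      (fun r hr => hξ0 r (hτT hr)) (fun r hr => hξM r (hτT hr)) s hs
  have hστ : Icc σ τ ⊆ Icc 0 τ := Icc_subset_Icc_left hσ.1
  have hrise := image_sub_le_mul_sub_of_deriv_le_segment
    (fun r hr => (hA r (hτT (hστ hr))).mono (hστ.trans hτT))
    (fun r hr => hA'le r (hστ (Ico_subset_Icc_self hr))) τ (right_mem_Icc.2 hσ.2)
  have hT : 0 ≤ T := ht.1.trans ht.2
  have hM : 0 ≤ M := (hξ0 0 (left_mem_Icc.2 hT)).trans (hξM 0 (left_mem_Icc.2 hT))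
  have hτle : τ ≤ T := hτ.2.trans ht.2
  have : W ≤ K * M * T ^ 2 * W := calc
    W ≤ K * W * τ * M * (τ - σ) := hrise
    _ ≤ K * W * T * M * T := by gcongr <;> linarith [hσ.1, hσ.2]
    _ = K * M * T ^ 2 * W := by ring
  nlinarith

theorem stmt_4_general (ε₀ R : ℝ) (hε₀ : 0 < ε₀)
    (A A' H H' φ ξ : ℝ → ℝ)
    (hAderiv : ∀ t ∈ Icc 0 ε₀, HasDerivWithinAt A (A' t) (Icc 0 ε₀) t)
    (hHderiv : ∀ t ∈ Icc 0 ε₀, HasDerivWithinAt H (H' t) (Icc 0 ε₀) t)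
    (hH0 : H 0 = 0)
    (hφcont : ContinuousOn φ (Icc 0 ε₀))
    (hξcont : ContinuousOn ξ (Icc 0 ε₀))
    (hφpos : ∀ t ∈ Icc 0 ε₀, 0 < φ t)
    (hξpos : ∀ t ∈ Icc 0 ε₀, 0 < ξ t)
    (hfirstvar : ∀ t ∈ Icc 0 ε₀, A' t = H t * ξ t)
    (hineq : ∀ t ∈ Icc 0 ε₀, H' t * φ t ≤ (R / 2) * (A 0 - A t)) :
    ∃ ε, 0 < ε ∧ ε ≤ ε₀ ∧ ∀ t ∈ Ico 0 ε, A t ≤ A 0 := by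
  obtain ⟨a, ha, hφmin⟩ := isCompact_Icc.exists_isMinOn (nonempty_Icc.2 hε₀.le) hφcont
  obtain ⟨b, -, hξmax⟩ := isCompact_Icc.exists_isMaxOn (nonempty_Icc.2 hε₀.le) hξcont
  have hφa := hφpos a ha
  set K := |R / 2| / φ a
  obtain ⟨ε, hε, hεε₀, hsmall⟩ := exists_pos_le_mul_sq_lt_one (K * ξ b) hε₀
  have hsub : Icc 0 ε ⊆ Icc 0 ε₀ := Icc_subset_Icc_right hεε₀
  refine ⟨ε, hε, hεε₀, fun t ht => image_le_left_of_coupled_deriv_bounds (by positivity)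
    (fun s hs => (hAderiv s (hsub hs)).mono hsub) (fun s hs => (hHderiv s (hsub hs)).mono hsub)
    hH0 (fun s hs => hfirstvar s (hsub hs)) (fun s hs => (hξpos s (hsub hs)).le)
    (fun s hs => hξmax (hsub hs)) (fun s hs => ?_) hsmall t (Ico_subset_Icc_self ht)⟩
  exact le_div_mul_abs_of_mul_le hφa (hφmin (hsub hs)) (hineq s (hsub hs))

/-- Analytic core of the right-hand half of Proposition 4.1: if `A` and `H`
are C¹ on `[0, ε₀]`, `H(0) = 0`, `A′(t) = H(t)·ξ(t)` (first variation of area)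
and `H′(t)·φ(t) ≤ (R/2)·(A(0) − A(t))` (inequality (8)), then `A(t) ≤ A(0)`
on `[0, ε)` for some `ε ∈ (0, ε₀]`. -/
theorem stmt_4 (ε₀ R : ℝ) (hε₀ : 0 < ε₀)
    (A A' H H' φ ξ : ℝ → ℝ)
    (hAderiv : ∀ t ∈ Icc 0 ε₀, HasDerivWithinAt A (A' t) (Icc 0 ε₀) t)
    (hA'cont : ContinuousOn A' (Icc 0 ε₀))
    (hHderiv : ∀ t ∈ Icc 0 ε₀, HasDerivWithinAt H (H' t) (Icc 0 ε₀) t)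
    (hH'cont : ContinuousOn H' (Icc 0 ε₀))
    (hH0 : H 0 = 0)
    (hφcont : ContinuousOn φ (Icc 0 ε₀))
    (hξcont : ContinuousOn ξ (Icc 0 ε₀))
    (hφpos : ∀ t ∈ Icc 0 ε₀, 0 < φ t)
    (hξpos : ∀ t ∈ Icc 0 ε₀, 0 < ξ t)
    (hfirstvar : ∀ t ∈ Icc 0 ε₀, A' t = H t * ξ t)
    (hineq : ∀ t ∈ Icc 0 ε₀, H' t * φ t ≤ (R / 2) * (A 0 - A t)) :
    ∃ ε, 0 < ε ∧ ε ≤ ε₀ ∧ ∀ t ∈ Ico 0 ε, A t ≤ A 0 :=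
  stmt_4_general ε₀ R hε₀ A A' H H' φ ξ hAderiv hHderiv hH0 hφcont hξcont hφpos hξpos hfirstvar
    hineq
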